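/- arXiv:1011.6186 — 3 statements merged into one kernel-verified Lean document; each statement's English description precedes it below -/
import Mathlib

section
/- If s and t are positive natural numbers with s dividing t, then every Leibniz-derivation of order s of a Lie algebra L is also a Leibniz-derivation of order t. -/
open Finset

/-- Right-nested bracket `[x₁,[x₂,…,[x_k,x_{k+1}]…]]` of a list of elements. -/
def nestedBracket {L : Type*} [LieRing L] : List L → L
  | [] => 0
  | [x] => x
  | x :: xs => ⁅x, nestedBracket xs⁆

/-- A Leibniz-derivation of order `k` of a Lie algebra. -/
def IsLeibnizDerivation {F L : Type*} [CommRing F] [LieRing L] [LieAlgebra F L] (k : ℕ)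
    (P : L →ₗ[F] L) : Prop :=
  ∀ x : Fin (k + 1) → L,
    P (nestedBracket (List.ofFn x)) =
      ∑ i : Fin (k + 1), nestedBracket (List.ofFn (Function.update x i (P (x i))))

section Aux

variable {L : Type*} [LieRing L]

lemma nestedBracket_cons (x : L) (xs : List L) (h : xs ≠ []) :
    nestedBracket (x :: xs) = ⁅x, nestedBracket xs⁆ := by
  cases xs with
  | nil => exact absurd rfl h
  | cons y ys => rfl

lemma nestedBracket_append (a b : List L) (hb : b ≠ []) :
    nestedBracket (a ++ b) = nestedBracket (a ++ [nestedBracket b]) := by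
  induction a with
  | nil => simp [nestedBracket]
  | cons x a ih =>
      rw [List.cons_append, nestedBracket_cons _ _ (by simp [hb]), ih, List.cons_append,
        nestedBracket_cons _ _ (by simp)]

lemma nestedBracket_zero (a : List L) : nestedBracket (a ++ [(0 : L)]) = 0 := by
  induction a with
  | nil => rfl
  | cons x a ih =>
      rw [List.cons_append, nestedBracket_cons _ _ (by simp), ih, lie_zero]

lemma nestedBracket_add (a : List L) (y z : L) :
    nestedBracket (a ++ [y + z]) = nestedBracket (a ++ [y]) + nestedBracket (a ++ [z]) := by
  induction a with
  | nil => rfl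
  | cons x a ih =>
      rw [List.cons_append, nestedBracket_cons _ _ (by simp), ih, List.cons_append,
        nestedBracket_cons _ _ (by simp), List.cons_append, nestedBracket_cons _ _ (by simp),
        lie_add]

lemma nestedBracket_sum {ι : Type*} (a : List L) (s : Finset ι) (f : ι → L) :
    nestedBracket (a ++ [∑ j ∈ s, f j]) = ∑ j ∈ s, nestedBracket (a ++ [f j]) :=
  map_sum (⟨⟨fun z => nestedBracket (a ++ [z]), nestedBracket_zero a⟩,
    nestedBracket_add a⟩ : L →+ L) f s

lemma ofFn_update {k : ℕ} (x : Fin k → L) (i : Fin k) (v : L) :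
    List.ofFn (Function.update x i v) = (List.ofFn x).set i v := by
  apply List.ext_getElem
  · simp
  · intro n h1 h2
    simp only [List.getElem_ofFn, List.getElem_set, Function.update_apply]
    by_cases hn : n = (i : ℕ)
    · simp [hn, Fin.ext_iff]
    · rw [if_neg (by simp [Fin.ext_iff, hn]), if_neg (fun h => hn h.symm)]

lemma getD_ofFn {k : ℕ} (x : Fin k → L) (i : Fin k) :
    (List.ofFn x).getD i 0 = x i := by
  rw [List.getD_eq_getElem _ 0 (by simp [i.isLt])]
  simp

variable {F : Type*} [CommRing F] [LieAlgebra F L] (P : L →ₗ[F] L)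

/-- List version of being a Leibniz derivation of order `n`. -/
def ListD (n : ℕ) : Prop :=
  ∀ l : List L, l.length = n + 1 →
    P (nestedBracket l) =
      ∑ i ∈ Finset.range (n + 1), nestedBracket (l.set i (P (l.getD i 0)))

lemma isLeibnizDerivation_iff_listD (k : ℕ) :
    IsLeibnizDerivation k P ↔ ListD P k := by
  constructor
  · intro h l hl
    have hx : List.ofFn (fun i : Fin (k + 1) => l.getD i 0) = l := by
      apply List.ext_getElem
      · simp [hl]
      · intro n h1 h2
        simp only [List.getElem_ofFn]
        exact List.getD_eq_getElem l 0 h2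
    have h2 := h (fun i : Fin (k + 1) => l.getD i 0)
    rw [hx] at h2
    rw [h2]
    have hterm : ∀ i : Fin (k + 1),
        nestedBracket (List.ofFn
            (Function.update (fun i : Fin (k + 1) => l.getD i 0) i (P (l.getD i 0)))) =
          nestedBracket (l.set i (P (l.getD i 0))) := by
      intro i
      rw [ofFn_update, hx]
    simp_rw [hterm]
    exact Fin.sum_univ_eq_sum_range (fun j => nestedBracket (l.set j (P (l.getD j 0)))) (k + 1)
  · intro h x
    have hl : (List.ofFn x).length = k + 1 := by simp
    rw [h (List.ofFn x) hl,
      ← Fin.sum_univ_eq_sum_range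
        (fun j => nestedBracket ((List.ofFn x).set j (P ((List.ofFn x).getD j 0)))) (k + 1)]
    refine Finset.sum_congr rfl fun i _ => ?_
    rw [ofFn_update, getD_ofFn]

lemma listD_mul {s : ℕ} (hs : 1 ≤ s) (hP : ListD P s) :
    ∀ m, 1 ≤ m → ListD P (s * m) := by
  intro m
  induction m with
  | zero => omega
  | succ m ih =>
      intro _
      rcases Nat.eq_zero_or_pos m with rfl | hm
      · rw [Nat.mul_one]; exact hP
      have IH := ih hm
      intro l hl
      have hlen : l.length = s + (s * m + 1) := by rw [hl]; ring
      set a := l.take s with ha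
      set b := l.drop s with hb
      have hab : a ++ b = l := List.take_append_drop s l
      have haL : a.length = s := by
        rw [ha, List.length_take]; omega
      have hbL : b.length = s * m + 1 := by
        rw [hb, List.length_drop]; omega
      have hbne : b ≠ [] := by
        intro h; rw [h] at hbL; simp at hbL
      have hstep := hP (a ++ [nestedBracket b]) (by simp [haL])
      have key : P (nestedBracket l) =
          ∑ i ∈ Finset.range (s + 1),
            nestedBracket ((a ++ [nestedBracket b]).set i
              (P ((a ++ [nestedBracket b]).getD i 0))) := by
        rw [← hab, nestedBracket_append a b hbne, hstep]
      rw [key, Finset.sum_range_succ]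
      -- last term: i = s
      have hgetDs : (a ++ [nestedBracket b]).getD s 0 = nestedBracket b := by
        rw [List.getD_append_right _ _ _ _ haL.le, haL]
        simp
      have hsets : ∀ v : L, (a ++ [nestedBracket b]).set s v = a ++ [v] := by
        intro v
        rw [List.set_append_right _ _ haL.le, haL]
        simp
      rw [hgetDs, hsets, IH b hbL, nestedBracket_sum]
      have hfirst : ∀ i ∈ Finset.range s,
          nestedBracket ((a ++ [nestedBracket b]).set i
              (P ((a ++ [nestedBracket b]).getD i 0))) =
            nestedBracket (l.set i (P (l.getD i 0))) := by
        intro i hi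
        simp only [Finset.mem_range] at hi
        have hia : i < a.length := by omega
        rw [List.getD_append _ _ _ _ hia, List.set_append_left _ _ hia,
          ← nestedBracket_append _ b hbne, ← hab, List.getD_append _ _ _ _ hia,
          List.set_append_left _ _ hia]
      have hsecond : ∀ j ∈ Finset.range (s * m + 1),
          nestedBracket (a ++ [nestedBracket (b.set j (P (b.getD j 0)))]) =
            nestedBracket (l.set (s + j) (P (l.getD (s + j) 0))) := by
        intro j hj
        simp only [Finset.mem_range] at hj
        have hbsne : b.set j (P (b.getD j 0)) ≠ [] := by
          intro h
          have := congrArg List.length h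
          simp [hbL] at this
        rw [← nestedBracket_append _ _ hbsne, ← hab,
          List.getD_append_right _ _ _ _ (by omega : a.length ≤ s + j),
          List.set_append_right _ _ (by omega : a.length ≤ s + j), haL,
          Nat.add_sub_cancel_left]
      rw [Finset.sum_congr rfl hfirst, Finset.sum_congr rfl hsecond]
      have hsplit : s * (m + 1) + 1 = s + (s * m + 1) := by ring
      rw [hsplit,
        Finset.sum_range_add (fun i => nestedBracket (l.set i (P (l.getD i 0)))) s (s * m + 1)]

end Aux

theorem leibnizDerivation_of_dvd
    {F L : Type*} [Field F] [LieRing L] [LieAlgebra F L]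
    {s t : ℕ} (hs : 1 ≤ s) (ht : 1 ≤ t) (hst : s ∣ t)
    (P : L →ₗ[F] L) (hP : IsLeibnizDerivation s P) :
    IsLeibnizDerivation t P := by
  obtain ⟨m, rfl⟩ := hst
  have hm : 1 ≤ m := by
    rcases Nat.eq_zero_or_pos m with rfl | h
    · simp at ht
    · exact h
  rw [isLeibnizDerivation_iff_listD] at hP ⊢
  exact listD_mul P hs hP m hm
end

section
/- Let L be a perfect Lie algebra over a field of characteristic zero, k ≥ 2 a natural number, and m a nonzero scalar that is not a negative integer. If a linear map f : L → L satisfies m·f([x₁,…,x_k]) + [x₁, f([x₂,…,x_k])] + [x₁,x₂,f([x₃,…,x_k])] + … + [x₁,…,x_{k-1}, f(x_k)] = 0 for all x₁,…,x_k ∈ L (all brackets nested to the right), then f = 0. -/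
open Finset

/-!
Read the hypothesis as an identity of operators: for a word `w = w₁ ⋯ w_N` put
`g p = ad w₁ ⋯ ad w_p ∘ f ∘ ad w_{p+1} ⋯ ad w_N`; then `m • g p + g (p+1) + ⋯ + g (p+n) = 0`
for every window of `n = k - 1` letters. Expanding a letter `⁅x, y⁆` by the Jacobi identity and
comparing the recurrences of the expanded words shows that, for `n ≥ 2`, `f` can be moved one
letter to the right whenever the letter before it is a bracket with at least `n - 1` letters to
its left. So if the last `n + 1` of `2n` letters are brackets, `g n = ⋯ = g (2n)`, whence
`(m + n) • g n = 0`, and the recurrence propagates zeros down to `g 0 = f ∘ ad w₁ ⋯ ad w_{2n}`.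
For `n = 1` a direct computation gives `m (m + 1) • (f ∘ ad ⁅x, y⁆) = 0`. As `L` is perfect,
brackets span `L`; this removes the restriction on the letters and then gives `f = 0`.
-/

section Perfect

variable {F L : Type*} [CommRing F] [LieRing L] [LieAlgebra F L]

theorem linearMap_eq_zero_of_map_lie_eq_zero
    (hperf : ⁅(⊤ : LieIdeal F L), (⊤ : LieIdeal F L)⁆ = ⊤) {M : Type*} [AddCommGroup M]
    [Module F M] (g : L →ₗ[F] M) (hg : ∀ x y : L, g ⁅x, y⁆ = 0) : g = 0 := by
  have hspan : Submodule.span F {z : L | ∃ x y : L, ⁅x, y⁆ = z} = ⊤ := by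
    simpa [hperf] using
      (LieSubmodule.lieIdeal_oper_eq_linear_span' (⊤ : LieIdeal F L) (⊤ : LieIdeal F L)).symm
  refine LinearMap.ext_on hspan ?_
  rintro _ ⟨x, y, rfl⟩
  simp [hg]

theorem eq_zero_of_mul_prod_ad_eq_zero
    (hperf : ⁅(⊤ : LieIdeal F L), (⊤ : LieIdeal F L)⁆ = ⊤) (T : Module.End F L) (j : ℕ)
    (h : ∀ w : List L, w.length = j → T * (w.map (LieAlgebra.ad F L)).prod = 0) : T = 0 := by
  induction j with
  | zero => simpa using h [] rfl
  | succ j ih =>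
    refine ih fun w hw => linearMap_eq_zero_of_map_lie_eq_zero hperf _ fun x y => ?_
    simpa using LinearMap.congr_fun (h (w ++ [x]) (by simp [hw])) y

end Perfect

theorem eq_zero_of_recurrence {F M : Type*} [Field F] [AddCommGroup M] [Module F M] {m : F}
    (hm : m ≠ 0) {n N : ℕ} (g : ℕ → M)
    (hrec : ∀ p, p + n ≤ N → m • g p + ∑ i ∈ range n, g (p + (i + 1)) = 0)
    (htail : ∀ p, N ≤ p + n → p ≤ N → g p = 0) : ∀ p ≤ N, g p = 0 := by
  intro p hp
  obtain ⟨d, hd⟩ : ∃ d, N - p = d := ⟨_, rfl⟩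
  induction d using Nat.strong_induction_on generalizing p with
  | _ d ih =>
    by_cases hpn : N ≤ p + n
    · exact htail p hpn hp
    · have h := hrec p (by omega)
      rw [sum_eq_zero fun i hi => by
        simp only [mem_range] at hi
        exact ih (N - (p + (i + 1))) (by omega) (p + (i + 1)) (by omega) rfl, add_zero] at h
      exact (smul_eq_zero.mp h).resolve_left hm

section InsertProd

attribute [local instance] LieRing.ofAssociativeRing

variable {F L A : Type*} [CommRing F] [LieRing L] [LieAlgebra F L] [Ring A] [Algebra F A]
  (ρ : L →ₗ⁅F⁆ A) (f : A)

theorem mul_prod_eq_zero_of_forall_lie (hperf : ⁅(⊤ : LieIdeal F L), (⊤ : LieIdeal F L)⁆ = ⊤)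
    (T : A) (w : List L)
    (h : ∀ w' : List L, w'.length = w.length → (∀ z ∈ w', ∃ x y : L, ⁅x, y⁆ = z) →
      T * (w'.map ρ).prod = 0) :
    T * (w.map ρ).prod = 0 := by
  induction w generalizing T with
  | nil => exact h [] rfl (by simp)
  | cons z w ih =>
    rw [List.map_cons, List.prod_cons, ← mul_assoc]
    refine ih _ fun w' hw' hbr => ?_
    have hlin : LinearMap.mulLeft F T ∘ₗ LinearMap.mulRight F (w'.map ρ).prod ∘ₗ
        (ρ : L →ₗ[F] A) = 0 := by
      refine linearMap_eq_zero_of_map_lie_eq_zero hperf _ fun x y => ?_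
      simpa [mul_assoc] using
        h (⁅x, y⁆ :: w') (by simp [hw']) (List.forall_mem_cons.mpr ⟨⟨x, y, rfl⟩, hbr⟩)
    simpa [mul_assoc] using LinearMap.congr_fun hlin z

def insertProd (w : List L) (p : ℕ) : A :=
  ((w.take p).map ρ).prod * f * ((w.drop p).map ρ).prod

theorem insertProd_zero (w : List L) : insertProd ρ f w 0 = f * (w.map ρ).prod := by
  simp [insertProd]

theorem insertProd_append_left (u v : List L) (q : ℕ) :
    insertProd ρ f (u ++ v) (u.length + q) = (u.map ρ).prod * insertProd ρ f v q := by
  simp [insertProd, List.take_length_add_append, List.drop_length_add_append, mul_assoc]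

theorem insertProd_append_right {u : List L} {q : ℕ} (hq : q ≤ u.length) (v : List L) :
    insertProd ρ f (u ++ v) q = insertProd ρ f u q * (v.map ρ).prod := by
  simp [insertProd, List.take_append_of_le_length hq, List.drop_append_of_le_length hq, mul_assoc]

theorem insertProd_lie_of_le {u : List L} {q : ℕ} (hq : q ≤ u.length) (x y : L) (r : List L) :
    insertProd ρ f (u ++ ⁅x, y⁆ :: r) q =
      insertProd ρ f (u ++ x :: y :: r) q - insertProd ρ f (u ++ y :: x :: r) q := by
  simp only [insertProd_append_right ρ f hq, List.map_cons, List.prod_cons, LieHom.map_lie,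
    Ring.lie_def]
  noncomm_ring

theorem insertProd_lie_of_lt (u : List L) (x y : L) (r : List L) {q : ℕ} (hq : u.length < q) :
    insertProd ρ f (u ++ ⁅x, y⁆ :: r) q =
      insertProd ρ f (u ++ x :: y :: r) (q + 1) - insertProd ρ f (u ++ y :: x :: r) (q + 1) := by
  obtain ⟨s, rfl⟩ : ∃ s, q = u.length + (1 + s) := ⟨q - u.length - 1, by omega⟩
  have hcons : ∀ (z : L) (w : List L) (s : ℕ), insertProd ρ f (z :: w) (1 + s) =
      ρ z * insertProd ρ f w s := fun z w s => by
    simpa using insertProd_append_left ρ f [z] w s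
  rw [show u.length + (1 + s) + 1 = u.length + (1 + (1 + s)) by omega]
  simp only [insertProd_append_left, hcons, LieHom.map_lie, Ring.lie_def]
  noncomm_ring

/-- For `ρ = ad` and `k = n + 1`, `insertProd ρ f xs p z = [x₁, …, x_p, f [x_{p+1}, …, x_n, z]]`,
so this is the hypothesis of `technical_lemma_perfect` read as an identity of operators. -/
def InsertionIdentity (m : F) (n : ℕ) : Prop :=
  ∀ xs : List L, xs.length = n →
    m • insertProd ρ f xs 0 + ∑ i ∈ range n, insertProd ρ f xs (i + 1) = 0

variable {ρ f} {m : F} {n : ℕ}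

theorem InsertionIdentity.recurrence (hH : InsertionIdentity ρ f m n) (w : List L) {p : ℕ}
    (hp : p + n ≤ w.length) :
    m • insertProd ρ f w p + ∑ i ∈ range n, insertProd ρ f w (p + (i + 1)) = 0 := by
  set u := w.take p
  set xs := (w.drop p).take n
  set r := (w.drop p).drop n
  have hu : u.length = p := by simp [u]; omega
  have hxs : xs.length = n := by simp [xs]; omega
  have hsplit : ∀ q ≤ n, insertProd ρ f w (p + q) =
      (u.map ρ).prod * insertProd ρ f xs q * (r.map ρ).prod := by
    intro q hq
    have hw : w = u ++ (xs ++ r) := by simp [u, xs, r]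
    rw [hw, ← hu, insertProd_append_left, insertProd_append_right ρ f (hxs ▸ hq), mul_assoc]
  have h0 : insertProd ρ f w p = (u.map ρ).prod * insertProd ρ f xs 0 * (r.map ρ).prod :=
    hsplit 0 (Nat.zero_le _)
  rw [h0, sum_congr rfl fun i hi => hsplit (i + 1) (by simp at hi; omega)]
  calc _ = (u.map ρ).prod *
        (m • insertProd ρ f xs 0 + ∑ i ∈ range n, insertProd ρ f xs (i + 1)) *
        (r.map ρ).prod := by
        simp only [mul_add, add_mul, mul_sum, sum_mul, mul_smul_comm, smul_mul_assoc]
    _ = 0 := by rw [hH xs hxs, mul_zero, zero_mul]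

theorem InsertionIdentity.insertProd_window_end (hH : InsertionIdentity ρ f m n)
    (u r : List L) (x y : L) {a : ℕ} (ha : a ≤ u.length) (hu : u.length < a + n)
    (hr : a + n ≤ u.length + 1 + r.length) :
    insertProd ρ f (u ++ ⁅x, y⁆ :: r) (a + n) =
      insertProd ρ f (u ++ x :: y :: r) (u.length + 1) -
        insertProd ρ f (u ++ y :: x :: r) (u.length + 1) := by
  set t := u.length
  set δ : ℕ → A := fun q =>
    insertProd ρ f (u ++ x :: y :: r) q - insertProd ρ f (u ++ y :: x :: r) q
  have window : ∀ g : ℕ → A,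
      ∑ i ∈ range n, g (a + (i + 1)) = ∑ q ∈ Ico (a + 1) (a + n + 1), g q := by
    intro g
    rw [sum_Ico_eq_sum_range, show a + n + 1 - (a + 1) = n by omega]
    exact sum_congr rfl fun i _ => by rw [add_assoc, add_comm 1 i]
  have hsplit : ∀ g : ℕ → A, ∑ q ∈ Ico (a + 1) (a + n + 1), g q =
      ∑ q ∈ Ico (a + 1) (t + 1), g q + ∑ q ∈ Ico (t + 1) (a + n + 1), g q := fun g =>
    (sum_Ico_consecutive g (by omega) (by omega)).symm
  have hδ : m • δ a +
      (∑ q ∈ Ico (a + 1) (t + 1), δ q + ∑ q ∈ Ico (t + 1) (a + n + 1), δ q) = 0 := by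
    have h₁ := hH.recurrence (u ++ x :: y :: r) (p := a) (by simp; omega)
    have h₂ := hH.recurrence (u ++ y :: x :: r) (p := a) (by simp; omega)
    rw [window, hsplit] at h₁ h₂
    simp only [δ, smul_sub, sum_sub_distrib]
    rw [← sub_eq_zero_of_eq (h₁.trans h₂.symm)]
    abel
  have hv := hH.recurrence (u ++ ⁅x, y⁆ :: r) (p := a) (by simp; omega)
  rw [window, hsplit, insertProd_lie_of_le ρ f ha,
    sum_congr rfl fun q hq => insertProd_lie_of_le ρ f (by simp at hq; omega) x y r,
    sum_congr rfl fun q hq => insertProd_lie_of_lt ρ f u x y r (by simp at hq; omega)] at hv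
  -- the two recurrences differ only to the right of the bracket, by a telescoping sum
  have htel : δ (a + n + 1) - δ (t + 1) = 0 := by
    rw [← sum_Ico_sub δ (by omega), sum_sub_distrib,
      add_left_cancel (add_left_cancel (hv.trans hδ.symm)), sub_self]
  rw [insertProd_lie_of_lt ρ f u x y r (by omega)]
  exact sub_eq_zero.mp htel

theorem InsertionIdentity.insertProd_succ_eq (hH : InsertionIdentity ρ f m n) (hn : 2 ≤ n)
    (u r : List L) (x y : L) (hu : n ≤ u.length + 1) (hr : r ≠ []) :
    insertProd ρ f (u ++ ⁅x, y⁆ :: r) (u.length + 2) =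
      insertProd ρ f (u ++ ⁅x, y⁆ :: r) (u.length + 1) := by
  have hr' : 1 ≤ r.length := List.length_pos_iff.mpr hr
  have h₁ := hH.insertProd_window_end u r x y (a := u.length + 1 - n) (by omega) (by omega)
    (by omega)
  have h₂ := hH.insertProd_window_end u r x y (a := u.length + 2 - n) (by omega) (by omega)
    (by omega)
  rw [Nat.sub_add_cancel (by omega)] at h₁ h₂
  rw [h₁, h₂]

end InsertProd

section Field

attribute [local instance] LieRing.ofAssociativeRing

variable {F L A : Type*} [Field F] [LieRing L] [LieAlgebra F L] [Ring A] [Algebra F A]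
  {ρ : L →ₗ⁅F⁆ A} {f : A} {m : F} {n : ℕ}

theorem InsertionIdentity.mul_prod_eq_zero_of_lie_tail (hH : InsertionIdentity ρ f m n)
    (hn : 2 ≤ n) (hm0 : m ≠ 0) (hmn : m + n ≠ 0) (u v : List L) (hu : u.length + 1 = n)
    (hv : v.length = n + 1) (hbr : ∀ z ∈ v, ∃ x y : L, ⁅x, y⁆ = z) :
    f * ((u ++ v).map ρ).prod = 0 := by
  set g : ℕ → A := insertProd ρ f (u ++ v)
  have hlen : (u ++ v).length = 2 * n := by simp; omega
  have hstep : ∀ s < n, g (n + s + 1) = g (n + s) := by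
    intro s hs
    obtain ⟨x, y, hxy⟩ := hbr v[s] (List.getElem_mem _)
    have hsplit : u ++ v = (u ++ v.take s) ++ ⁅x, y⁆ :: v.drop (s + 1) := by
      rw [hxy, ← List.drop_eq_getElem_cons, List.append_assoc, List.take_append_drop]
    have hlen' : (u ++ v.take s).length = n - 1 + s := by simp; omega
    have h := hH.insertProd_succ_eq hn (u ++ v.take s) (v.drop (s + 1)) x y (by omega)
      (by simp; omega)
    rw [← hsplit, hlen'] at h
    simp only [g]
    rw [show n + s + 1 = n - 1 + s + 2 by omega, show n + s = n - 1 + s + 1 by omega]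
    exact h
  have hconst : ∀ s ≤ n, g (n + s) = g n := by
    intro s hs
    induction s with
    | zero => rfl
    | succ s ih => rw [← add_assoc, hstep s (by omega), ih (by omega)]
  have hgn : g n = 0 := by
    have h := hH.recurrence (u ++ v) (p := n) (by omega)
    rw [sum_congr rfl fun i hi => hconst (i + 1) (by simp at hi; omega), sum_const, card_range,
      ← Nat.cast_smul_eq_nsmul F, ← add_smul] at h
    exact (smul_eq_zero.mp h).resolve_left hmn
  have h0 := eq_zero_of_recurrence hm0 g (N := 2 * n)
    (fun p hp => hH.recurrence (u ++ v) (by omega))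
    (fun p hp hpN => by
      obtain ⟨s, rfl⟩ : ∃ s, p = n + s := ⟨p - n, by omega⟩
      rw [hconst s (by omega), hgn]) 0 (Nat.zero_le _)
  simpa [g, insertProd_zero] using h0

theorem InsertionIdentity.mul_lie_eq_zero_of_one (hH : InsertionIdentity ρ f m 1)
    (hm0 : m ≠ 0) (hm1 : m + 1 ≠ 0) (x y : L) : f * ρ ⁅x, y⁆ = 0 := by
  have h : ∀ z, m • (f * ρ z) = -(ρ z * f) := fun z => by
    simpa [insertProd, eq_neg_iff_add_eq_zero] using hH [z] rfl
  have h₂ : ∀ z z', (m * m) • (f * (ρ z * ρ z')) = ρ z * ρ z' * f := fun z z' => by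
    rw [mul_smul, ← mul_assoc, ← smul_mul_assoc, h, neg_mul, smul_neg, mul_assoc,
      ← mul_smul_comm, h]
    noncomm_ring
  have : (m * (m + 1)) • (f * ρ ⁅x, y⁆) = 0 := by
    rw [mul_add, mul_one, add_smul, h, LieHom.map_lie, Ring.lie_def, mul_sub, smul_sub, h₂, h₂]
    noncomm_ring
  exact (smul_eq_zero.mp this).resolve_left (mul_ne_zero hm0 hm1)

theorem InsertionIdentity.mul_prod_eq_zero
    (hperf : ⁅(⊤ : LieIdeal F L), (⊤ : LieIdeal F L)⁆ = ⊤) (hH : InsertionIdentity ρ f m n)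
    (hn : 1 ≤ n) (hm0 : m ≠ 0) (hmn : m + n ≠ 0) (w : List L) (hw : w.length = 2 * n) :
    f * (w.map ρ).prod = 0 := by
  have htail : ∀ u v : List L, u.length + 1 = n → v.length = n + 1 →
      (∀ z ∈ v, ∃ x y : L, ⁅x, y⁆ = z) → f * ((u ++ v).map ρ).prod = 0 := by
    obtain rfl | hn2 : n = 1 ∨ 2 ≤ n := by omega
    · intro u v hu hv hbr
      obtain ⟨z, v, rfl⟩ := List.exists_cons_of_length_eq_add_one hv
      obtain ⟨x, y, rfl⟩ := hbr z List.mem_cons_self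
      rw [List.length_eq_zero_iff.mp (by omega : u.length = 0), List.nil_append, List.map_cons,
        List.prod_cons, ← mul_assoc, hH.mul_lie_eq_zero_of_one hm0 (by exact_mod_cast hmn) x y,
        zero_mul]
    · exact hH.mul_prod_eq_zero_of_lie_tail hn2 hm0 hmn
  rw [← List.take_append_drop (n - 1) w, List.map_append, List.prod_append, ← mul_assoc]
  refine mul_prod_eq_zero_of_forall_lie ρ hperf _ _ fun v hv hbr => ?_
  rw [mul_assoc, ← List.prod_append, ← List.map_append]
  exact htail _ v (by simp; omega) (by simp at hv; omega) hbr

end Field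

theorem nestedBracket_append_singleton (F : Type*) {L : Type*} [CommRing F] [LieRing L]
    [LieAlgebra F L] (xs : List L) (z : L) :
    nestedBracket (xs ++ [z]) = (xs.map (LieAlgebra.ad F L)).prod z := by
  induction xs with
  | nil => rfl
  | cons x xs ih =>
    cases xs with
    | nil => rfl
    | cons y xs => simpa [nestedBracket] using congrArg (⁅x, ·⁆) ih

theorem insertProd_ad_apply {F L : Type*} [CommRing F] [LieRing L] [LieAlgebra F L]
    (f : Module.End F L) {xs : List L} {p : ℕ} (hp : p ≤ xs.length) (z : L) :
    insertProd (LieAlgebra.ad F L) f xs p z =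
      nestedBracket ((xs ++ [z]).take p ++ [f (nestedBracket ((xs ++ [z]).drop p))]) := by
  rw [List.take_append_of_le_length hp, List.drop_append_of_le_length hp,
    nestedBracket_append_singleton F, nestedBracket_append_singleton F]
  rfl

theorem insertionIdentity_ad_of_nested {F L : Type*} [CommRing F] [LieRing L] [LieAlgebra F L]
    {k : ℕ} (hk : 1 ≤ k) {m : F} (f : L →ₗ[F] L)
    (hf : ∀ x : Fin k → L,
      m • f (nestedBracket (List.ofFn x)) +
        ∑ i ∈ Finset.range (k - 1),
          nestedBracket ((List.ofFn x).take (i + 1) ++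
            [f (nestedBracket ((List.ofFn x).drop (i + 1)))]) = 0) :
    InsertionIdentity (LieAlgebra.ad F L) f m (k - 1) := by
  intro xs hxs
  ext z
  have hl : (xs ++ [z]).length = k := by simp; omega
  have hofFn : List.ofFn (fun i : Fin k => (xs ++ [z])[(i : ℕ)]) = xs ++ [z] := by
    apply List.ext_getElem <;> simp [hl]
  have h := hf fun i => (xs ++ [z])[(i : ℕ)]
  rw [hofFn, ← hxs] at h
  simp only [LinearMap.add_apply, LinearMap.smul_apply, LinearMap.sum_apply,
    LinearMap.zero_apply]
  rw [← hxs, insertProd_ad_apply f (Nat.zero_le _),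
    sum_congr rfl fun i hi => insertProd_ad_apply f (by simp at hi; omega) z]
  simpa [nestedBracket] using h

theorem technical_lemma_perfect_general
    {F L : Type*} [Field F] [LieRing L] [LieAlgebra F L]
    (hperf : ⁅(⊤ : LieIdeal F L), (⊤ : LieIdeal F L)⁆ = ⊤)
    {k : ℕ} (hk : 2 ≤ k) {m : F} (hm0 : m ≠ 0)
    (hm : ∀ n : ℕ, 0 < n → m ≠ -(n : F))
    (f : L →ₗ[F] L)
    (hf : ∀ x : Fin k → L,
      m • f (nestedBracket (List.ofFn x)) +
        ∑ i ∈ Finset.range (k - 1),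
          nestedBracket ((List.ofFn x).take (i + 1) ++
            [f (nestedBracket ((List.ofFn x).drop (i + 1)))]) = 0) :
    f = 0 := by
  have hmk : m + (k - 1 : ℕ) ≠ 0 := fun h =>
    hm (k - 1) (by omega) (eq_neg_of_add_eq_zero_left h)
  have hH := insertionIdentity_ad_of_nested (by omega) f hf
  exact eq_zero_of_mul_prod_ad_eq_zero hperf f (2 * (k - 1)) fun w hw =>
    hH.mul_prod_eq_zero hperf (by omega) hm0 hmk w hw

theorem technical_lemma_perfect
    {F L : Type*} [Field F] [CharZero F] [LieRing L] [LieAlgebra F L]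
    (hperf : ⁅(⊤ : LieIdeal F L), (⊤ : LieIdeal F L)⁆ = ⊤)
    {k : ℕ} (hk : 2 ≤ k) {m : F} (hm0 : m ≠ 0)
    (hm : ∀ n : ℕ, 0 < n → m ≠ -(n : F))
    (f : L →ₗ[F] L)
    (hf : ∀ x : Fin k → L,
      m • f (nestedBracket (List.ofFn x)) +
        ∑ i ∈ Finset.range (k - 1),
          nestedBracket ((List.ofFn x).take (i + 1) ++
            [f (nestedBracket ((List.ofFn x).drop (i + 1)))]) = 0) :
    f = 0 :=
  technical_lemma_perfect_general hperf hk hm0 hm f hf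
end

section
/- Every Leibniz-derivation of a perfect Lie algebra over a field of characteristic zero is a derivation in the classical sense. -/
open Finset

/-!
Expanding an element as a combination of `m`-fold brackets and applying the Leibniz rule of
order `m - 1` to each bracket yields a value that, for `1 ≤ m ≤ k + 1`, is well defined modulo
the centre `Z`: at level `k + 1` it is `P` itself, and passing down one level only enlarges the
ambiguity to the second centre, which equals `Z` because `L` is perfect. Linear representatives
`σ_m` of these values satisfy `σ_{m+1} [x, w] ≡ [P x, w] + [x, σ_m w]`, and `σ_1 = σ_{k+1} = P`
makes the sequence periodic of period `k`. The differences `E_m = σ_{m+1} - σ_m` then satisfy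
`E_{m+1} [x, w] ≡ [x, E_m w]`; expanding `E_{m+2} [[x, z], w]` by the Jacobi identity gives
`E_{m+1} ≡ E_m`. Over one period the `E_m` sum to zero, so `k • E_m ≡ 0` and, in characteristic
zero, `σ_k ≡ P`. The top-level rule `P [x, y] = [P x, y] + [x, σ_k y]` is then the derivation rule.
-/

open LieAlgebra LieModule

section Perfect

variable {R L : Type*} [CommRing R] [LieRing L] [LieAlgebra R L]

theorem span_lie_eq_top_of_perfect (hperf : ⁅(⊤ : LieIdeal R L), (⊤ : LieIdeal R L)⁆ = ⊤) :
    Submodule.span R {m : L | ∃ x y : L, ⁅x, y⁆ = m} = ⊤ := by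
  have h := LieSubmodule.lieIdeal_oper_eq_linear_span
    (I := (⊤ : LieIdeal R L)) (N := (⊤ : LieIdeal R L))
  rw [hperf, LieSubmodule.top_toSubmodule] at h
  rw [h]
  congr 1
  ext m
  simp

theorem lie_mem_of_forall_lie_lie_mem (hperf : ⁅(⊤ : LieIdeal R L), (⊤ : LieIdeal R L)⁆ = ⊤)
    (N : Submodule R L) {a : L} (h : ∀ x y : L, ⁅a, ⁅x, y⁆⁆ ∈ N) (v : L) : ⁅a, v⁆ ∈ N := by
  have hle : Submodule.span R {m : L | ∃ x y : L, ⁅x, y⁆ = m} ≤ N.comap (ad R L a) :=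
    Submodule.span_le.2 fun _ ⟨x, y, hxy⟩ => hxy ▸ h x y
  rw [span_lie_eq_top_of_perfect hperf] at hle
  exact hle Submodule.mem_top

/-- The second centre of a perfect Lie algebra is its centre. -/
theorem mem_center_of_forall_lie_mem_center (hperf : ⁅(⊤ : LieIdeal R L), (⊤ : LieIdeal R L)⁆ = ⊤)
    {a : L} (h : ∀ x : L, ⁅x, a⁆ ∈ center R L) : a ∈ center R L := by
  rw [mem_maxTrivSubmodule]
  intro v
  rw [← lie_skew, neg_eq_zero]
  refine lie_mem_of_forall_lie_lie_mem hperf ⊥ (fun x y => ?_) v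
  have hx := (mem_maxTrivSubmodule R L L _).1 (h x) y
  have hy := (mem_maxTrivSubmodule R L L _).1 (h y) x
  rw [Submodule.mem_bot, ← lie_skew, lie_lie, hx, hy, sub_zero, neg_zero]

theorem mem_center_of_forall_lie_lie_mem_center
    (hperf : ⁅(⊤ : LieIdeal R L), (⊤ : LieIdeal R L)⁆ = ⊤)
    {a : L} (h : ∀ x y : L, ⁅⁅x, y⁆, a⁆ ∈ center R L) : a ∈ center R L := by
  refine mem_center_of_forall_lie_mem_center hperf fun v => ?_
  rw [← lie_skew, ← LieSubmodule.mem_toSubmodule]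
  refine neg_mem (lie_mem_of_forall_lie_lie_mem hperf _ (fun x y => ?_) v)
  rw [← lie_skew]
  exact neg_mem (h x y)

theorem sub_mem_center_of_intertwine (hperf : ⁅(⊤ : LieIdeal R L), (⊤ : LieIdeal R L)⁆ = ⊤)
    (A B C : L →ₗ[R] L) (hAB : ∀ x w : L, A ⁅x, w⁆ - ⁅x, B w⁆ ∈ center R L)
    (hBC : ∀ x w : L, B ⁅x, w⁆ - ⁅x, C w⁆ ∈ center R L) (w : L) : B w - C w ∈ center R L := by
  refine mem_center_of_forall_lie_lie_mem_center hperf fun x z => ?_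
  have key : ⁅⁅x, z⁆, B w - C w⁆ =
      (A ⁅x, ⁅z, w⁆⁆ - ⁅x, B ⁅z, w⁆⁆) - (A ⁅z, ⁅x, w⁆⁆ - ⁅z, B ⁅x, w⁆⁆)
        - (A ⁅⁅x, z⁆, w⁆ - ⁅⁅x, z⁆, B w⁆)
        + ⁅x, B ⁅z, w⁆ - ⁅z, C w⁆⁆ - ⁅z, B ⁅x, w⁆ - ⁅x, C w⁆⁆ := by
    simp only [lie_sub, lie_lie, map_sub]
    abel
  rw [key]
  exact sub_mem (add_mem (sub_mem (sub_mem (hAB _ _) (hAB _ _)) (hAB _ _))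
    ((center R L).lie_mem (hBC _ _))) ((center R L).lie_mem (hBC _ _))

end Perfect

section LeibnizSpan

variable {R L : Type*} [CommRing R] [LieRing L] [LieAlgebra R L]

def leibnizSum (P : L →ₗ[R] L) {m : ℕ} (x : Fin m → L) : L :=
  ∑ i, nestedBracket (List.ofFn (Function.update x i (P (x i))))

/-- The pairs `(w, q)` where `q` is what the Leibniz rule of order `m - 1` assigns to some way of
writing `w` as a linear combination of `m`-fold nested brackets. -/
def leibnizSpan (P : L →ₗ[R] L) (m : ℕ) : Submodule R (L × L) :=
  Submodule.span R (Set.range fun x : Fin m → L => (nestedBracket (List.ofFn x), leibnizSum P x))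

theorem nestedBracket_ofFn_cons {m : ℕ} (a : L) (x : Fin (m + 1) → L) :
    nestedBracket (List.ofFn (Fin.cons a x : Fin (m + 2) → L)) =
      ⁅a, nestedBracket (List.ofFn x)⁆ := by
  rw [List.ofFn_succ]
  simp only [Fin.cons_zero, Fin.cons_succ]
  rw [List.ofFn_succ]
  rfl

theorem leibnizSum_cons (P : L →ₗ[R] L) {m : ℕ} (a : L) (x : Fin (m + 1) → L) :
    leibnizSum P (Fin.cons a x : Fin (m + 2) → L) =
      ⁅P a, nestedBracket (List.ofFn x)⁆ + ⁅a, leibnizSum P x⁆ := by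
  simp only [leibnizSum, Fin.sum_univ_succ (n := m + 1), Fin.cons_zero, Fin.cons_succ,
    Fin.update_cons_zero, ← Fin.cons_update, nestedBracket_ofFn_cons, lie_sum]

theorem isLeibnizDerivation_zero (P : L →ₗ[R] L) : IsLeibnizDerivation 0 P := by
  intro x
  simp [nestedBracket]

theorem leibnizSpan_le_graph {P : L →ₗ[R] L} {k : ℕ} (hP : IsLeibnizDerivation k P) :
    leibnizSpan P (k + 1) ≤ P.graph :=
  Submodule.span_le.2 fun _ ⟨x, hx⟩ => hx ▸ (P.mem_graph_iff _).2 (hP x).symm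

theorem lie_mem_leibnizSpan (P : L →ₗ[R] L) {m : ℕ} (a : L) {p : L × L}
    (hp : p ∈ leibnizSpan P (m + 1)) :
    (⁅a, p.1⁆, ⁅P a, p.1⁆ + ⁅a, p.2⁆) ∈ leibnizSpan P (m + 2) := by
  let f : L × L →ₗ[R] L × L :=
    (ad R L a ∘ₗ LinearMap.fst R L L).prod
      (ad R L (P a) ∘ₗ LinearMap.fst R L L + ad R L a ∘ₗ LinearMap.snd R L L)
  have hmap : (leibnizSpan P (m + 1)).map f ≤ leibnizSpan P (m + 2) := by
    refine (Submodule.map_span_le _ _ _).2 fun _ ⟨x, hx⟩ =>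
      hx ▸ Submodule.subset_span ⟨Fin.cons a x, ?_⟩
    dsimp only
    rw [nestedBracket_ofFn_cons, leibnizSum_cons]
    rfl
  exact hmap ⟨p, hp, rfl⟩

theorem map_fst_leibnizSpan (hperf : ⁅(⊤ : LieIdeal R L), (⊤ : LieIdeal R L)⁆ = ⊤)
    (P : L →ₗ[R] L) (m : ℕ) : (leibnizSpan P (m + 1)).map (LinearMap.fst R L L) = ⊤ := by
  induction m with
  | zero =>
    refine eq_top_iff.2 fun w _ => ⟨(w, P w), Submodule.subset_span ⟨![w], ?_⟩, rfl⟩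
    simp [leibnizSum, nestedBracket]
  | succ m ih =>
    rw [eq_top_iff, ← span_lie_eq_top_of_perfect hperf, Submodule.span_le]
    rintro _ ⟨x, y, rfl⟩
    obtain ⟨p, hp, rfl⟩ : y ∈ (leibnizSpan P (m + 1)).map (LinearMap.fst R L L) :=
      ih ▸ Submodule.mem_top
    exact ⟨_, lie_mem_leibnizSpan P x hp, rfl⟩

theorem mem_center_of_zero_mem_leibnizSpan (hperf : ⁅(⊤ : LieIdeal R L), (⊤ : LieIdeal R L)⁆ = ⊤)
    {P : L →ₗ[R] L} {k : ℕ} (hP : IsLeibnizDerivation k P) {m : ℕ} (hm : m ≤ k) {q : L}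
    (hq : (0, q) ∈ leibnizSpan P (m + 1)) : q ∈ center R L := by
  obtain ⟨d, rfl⟩ := Nat.exists_eq_add_of_le hm
  clear hm
  induction d generalizing m q with
  | zero =>
    have hq0 : q = P 0 := (P.mem_graph_iff _).1 (leibnizSpan_le_graph hP hq)
    rw [hq0, map_zero]
    exact zero_mem _
  | succ d ih =>
    refine mem_center_of_forall_lie_mem_center hperf fun x => ?_
    have hx := lie_mem_leibnizSpan P x hq
    simp only [lie_zero, zero_add] at hx
    exact ih hx (by rwa [Nat.add_right_comm])

end LeibnizSpan

section Field

variable {F L : Type*} [Field F] [LieRing L] [LieAlgebra F L]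

theorem exists_linearMap_mem_leibnizSpan
    (hperf : ⁅(⊤ : LieIdeal F L), (⊤ : LieIdeal F L)⁆ = ⊤) (P : L →ₗ[F] L) (m : ℕ) :
    ∃ σ : L →ₗ[F] L, ∀ w, (w, σ w) ∈ leibnizSpan P (m + 1) := by
  set S := leibnizSpan P (m + 1)
  have hrange : LinearMap.range (LinearMap.fst F L L ∘ₗ S.subtype) = ⊤ := by
    rw [LinearMap.range_comp, Submodule.range_subtype, map_fst_leibnizSpan hperf]
  obtain ⟨g, hg⟩ := (LinearMap.fst F L L ∘ₗ S.subtype).exists_rightInverse_of_surjective hrange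
  refine ⟨LinearMap.snd F L L ∘ₗ S.subtype ∘ₗ g, fun w => ?_⟩
  convert (g w).2 using 1
  exact Prod.ext (LinearMap.congr_fun hg w).symm rfl

theorem sub_mem_center_of_periodic [CharZero F]
    (hperf : ⁅(⊤ : LieIdeal F L), (⊤ : LieIdeal F L)⁆ = ⊤) {K : ℕ} (hK : K ≠ 0) (D : L → L)
    {Q : ℕ → L →ₗ[F] L} (hQ : Function.Periodic Q K)
    (hstep : ∀ (m : ℕ) (x w : L), Q (m + 1) ⁅x, w⁆ - (⁅D x, w⁆ + ⁅x, Q m w⁆) ∈ center F L)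
    (m : ℕ) (w : L) :
    Q (m + 1) w - Q m w ∈ center F L := by
  set E : ℕ → L →ₗ[F] L := fun m => Q (m + 1) - Q m with hE
  have hEE : ∀ (m : ℕ) (x w : L), E (m + 1) ⁅x, w⁆ - ⁅x, E m w⁆ ∈ center F L := by
    intro m x w
    convert sub_mem (hstep (m + 1) x w) (hstep m x w) using 1
    simp only [hE, LinearMap.sub_apply, lie_sub]
    abel
  have hsucc : ∀ m w, E (m + 1) w - E m w ∈ center F L := fun m =>
    sub_mem_center_of_intertwine hperf (E (m + 2)) (E (m + 1)) (E m) (hEE (m + 1)) (hEE m)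
  have hconst : ∀ m w, E m w - E 0 w ∈ center F L := by
    intro m w
    induction m with
    | zero => simp
    | succ m ih => simpa using add_mem (hsucc m w) ih
  have hsum : ∑ m ∈ Finset.range K, E m = 0 := by
    rw [Finset.sum_range_sub, hQ.eq, sub_self]
  have hK0 : (K : F) • E 0 w ∈ center F L := by
    have : (K : F) • E 0 w = -∑ m ∈ Finset.range K, (E m w - E 0 w) := by
      rw [Finset.sum_sub_distrib, ← LinearMap.sum_apply, hsum, Finset.sum_const,
        Finset.card_range, Nat.cast_smul_eq_nsmul]
      simp
    rw [this]
    exact neg_mem (sum_mem fun m _ => hconst m w)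
  have h0 : E 0 w ∈ center F L :=
    ((center F L).toSubmodule.smul_mem_iff (Nat.cast_ne_zero.2 hK)).1 hK0
  have := add_mem (hconst m w) h0
  rwa [sub_add_cancel] at this

theorem exists_linearMap_mem_leibnizSpan_sub_mem_center [CharZero F]
    (hperf : ⁅(⊤ : LieIdeal F L), (⊤ : LieIdeal F L)⁆ = ⊤) {k : ℕ} {P : L →ₗ[F] L}
    (hP : IsLeibnizDerivation (k + 1) P) :
    ∃ σ : L →ₗ[F] L, (∀ w, (w, σ w) ∈ leibnizSpan P (k + 1)) ∧ ∀ w, P w - σ w ∈ center F L := by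
  choose σ hσ using exists_linearMap_mem_leibnizSpan hperf P
  have hσP : ∀ m, m = 0 ∨ m = k + 1 → σ m = P := by
    rintro m (rfl | rfl) <;> ext w
    · exact (P.mem_graph_iff _).1 (leibnizSpan_le_graph (isLeibnizDerivation_zero P) (hσ 0 w))
    · exact (P.mem_graph_iff _).1 (leibnizSpan_le_graph hP (hσ (k + 1) w))
  -- the levels `1, …, k + 1` repeated periodically: the wrap-around from level `k + 1` back to
  -- level `1` is harmless because both carry `P`
  set Q : ℕ → L →ₗ[F] L := fun m => σ (m % (k + 1))
  have hlt : ∀ m, m % (k + 1) < k + 1 := fun m => Nat.mod_lt m (by omega)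
  have hQsucc : ∀ m, Q (m + 1) = σ (m % (k + 1) + 1) := by
    intro m
    simp only [Q, ← Nat.mod_add_mod m (k + 1) 1]
    obtain h | h : m % (k + 1) + 1 < k + 1 ∨ m % (k + 1) + 1 = k + 1 := by
      have := hlt m; omega
    · rw [Nat.mod_eq_of_lt h]
    · rw [h, Nat.mod_self, hσP 0 (.inl rfl), hσP _ (.inr rfl)]
  have hstep : ∀ (m : ℕ) (x w : L), Q (m + 1) ⁅x, w⁆ - (⁅P x, w⁆ + ⁅x, Q m w⁆) ∈ center F L := by
    intro m x w
    refine mem_center_of_zero_mem_leibnizSpan hperf hP (Nat.succ_le_of_lt (hlt m)) ?_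
    rw [hQsucc, ← sub_self ⁅x, w⁆]
    exact sub_mem (hσ _ _) (lie_mem_leibnizSpan P x (hσ (m % (k + 1)) w))
  refine ⟨σ k, hσ k, fun w => ?_⟩
  have h := sub_mem_center_of_periodic hperf k.succ_ne_zero P
    (fun m => by simp only [Q, Nat.add_mod_right]) hstep k w
  rw [hQsucc, Nat.mod_eq_of_lt k.lt_succ_self, hσP _ (.inr rfl)] at h
  simpa only [Q, Nat.mod_eq_of_lt k.lt_succ_self] using h

end Field

theorem leibnizDerivation_of_perfect_is_derivation_general
    {F L : Type*} [Field F] [CharZero F] [LieRing L] [LieAlgebra F L]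
    (hperf : ⁅(⊤ : LieIdeal F L), (⊤ : LieIdeal F L)⁆ = ⊤)
    {k : ℕ} (hk : 1 ≤ k) (P : L →ₗ[F] L) (hP : IsLeibnizDerivation k P) :
    ∀ x y : L, P ⁅x, y⁆ = ⁅P x, y⁆ + ⁅x, P y⁆ := by
  obtain ⟨k, rfl⟩ := Nat.exists_eq_add_of_le' hk
  obtain ⟨σ, hσ, hσP⟩ := exists_linearMap_mem_leibnizSpan_sub_mem_center hperf hP
  intro x y
  have htop : ⁅P x, y⁆ + ⁅x, σ y⁆ = P ⁅x, y⁆ :=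
    (P.mem_graph_iff _).1 (leibnizSpan_le_graph hP (lie_mem_leibnizSpan P x (hσ y)))
  have hxy : ⁅x, P y⁆ = ⁅x, σ y⁆ := by
    rw [← sub_eq_zero, ← lie_sub]
    exact (mem_maxTrivSubmodule F L L _).1 (hσP y) x
  rw [← htop, hxy]

theorem leibnizDerivation_of_perfect_is_derivation
    {F L : Type*} [Field F] [CharZero F] [LieRing L] [LieAlgebra F L]
    [FiniteDimensional F L]
    (hperf : ⁅(⊤ : LieIdeal F L), (⊤ : LieIdeal F L)⁆ = ⊤)
    {k : ℕ} (hk : 1 ≤ k) (P : L →ₗ[F] L) (hP : IsLeibnizDerivation k P) :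
    ∀ x y : L, P ⁅x, y⁆ = ⁅P x, y⁆ + ⁅x, P y⁆ :=
  leibnizDerivation_of_perfect_is_derivation_general hperf hk P hP
end
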